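/- arXiv:1909.12039 — 9 statements merged into one kernel-verified Lean document; each statement's English description precedes it below -/
import Mathlib

section
/- Let {R_α}_{α ∈ A} be a family of rings (associative with unity) and for each α let I_α be a two-sided ideal of R_α. Then the product ring R = Π_α R_α is weakly I-clean for the product ideal I = Π_α I_α if and only if each R_α is weakly I_α-clean and at most one R_α fails to be I_α-clean. -/
/-- A ring `R` is `I`-clean if every element is the sum of an idempotent and
an element of the two-sided ideal `I`. -/
def IsIdealClean {R : Type*} [Ring R] (I : TwoSidedIdeal R) : Prop :=
  ∀ x : R, ∃ e : R, IsIdempotentElem e ∧ x - e ∈ I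

/-- A ring `R` is weakly `I`-clean if for every `x` there is an idempotent `e`
with `x - e ∈ I` or `x + e ∈ I`. -/
def IsWeaklyIdealClean {R : Type*} [Ring R] (I : TwoSidedIdeal R) : Prop :=
  ∀ x : R, ∃ e : R, IsIdempotentElem e ∧ (x - e ∈ I ∨ x + e ∈ I)

/-!
An element `x` of the product is weakly clean through one global sign: `x - e` or `x + e`
lies in `Π I α`. A component that is not `I α`-clean only admits one of the two signs for a
suitable `x α`, so two such components `α ≠ β` would demand opposite signs at once
(take `x = single α a - single β b`). Conversely, in an `I α`-clean ring both signs are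
available, since `-x - e ∈ I α` gives `x + e ∈ I α`; hence the sign forced by the single
exceptional component can be matched everywhere else.
-/

namespace TwoSidedIdeal

theorem neg_sub_mem_iff {R : Type*} [Ring R] (I : TwoSidedIdeal R) {x y : R} :
    -x - y ∈ I ↔ x + y ∈ I := by
  rw [← neg_add', neg_mem_iff]

def pi {A : Type*} {R : A → Type*} [∀ α, Ring (R α)] (I : ∀ α, TwoSidedIdeal (R α)) :
    TwoSidedIdeal (∀ α, R α) :=
  .mk' {x | ∀ α, x α ∈ I α} (fun α => (I α).zero_mem)
    (fun hx hy α => (I α).add_mem (hx α) (hy α)) (fun hx α => (I α).neg_mem (hx α))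
    (fun hy α => (I α).mul_mem_left _ _ (hy α))
    (fun hx α => (I α).mul_mem_right _ _ (hx α))

@[simp]
theorem mem_pi {A : Type*} {R : A → Type*} [∀ α, Ring (R α)] {I : ∀ α, TwoSidedIdeal (R α)}
    {x : ∀ α, R α} : x ∈ pi I ↔ ∀ α, x α ∈ I α := by
  rw [pi, mem_mk', Set.mem_ofPred_eq]

end TwoSidedIdeal

open TwoSidedIdeal

theorem IsIdealClean.isWeaklyIdealClean {R : Type*} [Ring R] {I : TwoSidedIdeal R}
    (h : IsIdealClean I) : IsWeaklyIdealClean I := fun x =>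
  (h x).imp fun _ ⟨he, hxe⟩ => ⟨he, .inl hxe⟩

theorem Pi.exists_isIdempotentElem_forall {A : Type*} {M : A → Type*} [∀ α, Mul (M α)]
    {P : ∀ α, M α → Prop} (h : ∀ α, ∃ e, IsIdempotentElem e ∧ P α e) :
    ∃ e : ∀ α, M α, IsIdempotentElem e ∧ ∀ α, P α (e α) := by
  choose e he hP using h
  exact ⟨e, funext he, hP⟩

section Pi

variable {A : Type*} {R : A → Type*} [∀ α, Ring (R α)] {I : ∀ α, TwoSidedIdeal (R α)}

theorem IsWeaklyIdealClean.of_pi (h : IsWeaklyIdealClean (pi I)) (α : A) :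
    IsWeaklyIdealClean (I α) := by
  classical
  intro x
  obtain ⟨e, he, hxe⟩ := h (Pi.single α x)
  refine ⟨e α, congr_fun he α, ?_⟩
  simpa using hxe.imp (mem_pi.mp · α) (mem_pi.mp · α)

theorem IsWeaklyIdealClean.eq_of_pi (h : IsWeaklyIdealClean (pi I)) {α β : A}
    (hα : ¬ IsIdealClean (I α)) (hβ : ¬ IsIdealClean (I β)) : α = β := by
  classical
  by_contra hne
  simp only [IsIdealClean, not_forall, not_exists, not_and] at hα hβ
  obtain ⟨a, ha⟩ := hα
  obtain ⟨b, hb⟩ := hβ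
  obtain ⟨e, he, hxe | hxe⟩ := h (Pi.single α a - Pi.single β b)
  · refine ha (e α) (congr_fun he α) ?_
    simpa [Pi.single_eq_of_ne hne] using mem_pi.mp hxe α
  · refine hb (e β) (congr_fun he β) ?_
    have hβ : -b + e β ∈ I β := by
      simpa [Pi.single_eq_of_ne' hne] using mem_pi.mp hxe β
    rwa [neg_add_eq_sub, sub_mem_comm_iff] at hβ

theorem IsIdealClean.pi (h : ∀ α, IsIdealClean (I α)) : IsIdealClean (pi I) := fun x => by
  simpa using Pi.exists_isIdempotentElem_forall fun α => h α (x α)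

theorem exists_sub_mem_pi_of_forall_ne_isIdealClean {α₀ : A}
    (h : ∀ α ≠ α₀, IsIdealClean (I α))
    {x : ∀ α, R α} {e₀ : R α₀} (he₀ : IsIdempotentElem e₀) (hxe₀ : x α₀ - e₀ ∈ I α₀) :
    ∃ e, IsIdempotentElem e ∧ x - e ∈ pi I := by
  suffices ∀ α, ∃ e, IsIdempotentElem e ∧ x α - e ∈ I α by
    simpa using Pi.exists_isIdempotentElem_forall this
  intro α
  by_cases hα : α = α₀
  · subst hα
    exact ⟨e₀, he₀, hxe₀⟩
  · exact h α hα (x α)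

theorem IsWeaklyIdealClean.pi_of_forall_ne {α₀ : A} (h₀ : IsWeaklyIdealClean (I α₀))
    (h : ∀ α ≠ α₀, IsIdealClean (I α)) : IsWeaklyIdealClean (pi I) := by
  intro x
  obtain ⟨e₀, he₀, hxe₀ | hxe₀⟩ := h₀ (x α₀)
  · exact (exists_sub_mem_pi_of_forall_ne_isIdealClean h he₀ hxe₀).imp
      fun _ ⟨he, hxe⟩ => ⟨he, .inl hxe⟩
  · obtain ⟨e, he, hxe⟩ := exists_sub_mem_pi_of_forall_ne_isIdealClean (x := -x) h he₀
      ((I α₀).neg_sub_mem_iff.mpr hxe₀)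
    exact ⟨e, he, .inr ((pi I).neg_sub_mem_iff.mp hxe)⟩

theorem isWeaklyIdealClean_pi_iff :
    IsWeaklyIdealClean (pi I) ↔ (∀ α, IsWeaklyIdealClean (I α)) ∧
      ∀ α β : A, ¬ IsIdealClean (I α) → ¬ IsIdealClean (I β) → α = β := by
  refine ⟨fun h => ⟨h.of_pi, fun _ _ => h.eq_of_pi⟩, fun ⟨hweak, hunique⟩ => ?_⟩
  by_cases hclean : ∀ α, IsIdealClean (I α)
  · exact (IsIdealClean.pi hclean).isWeaklyIdealClean
  · push Not at hclean
    obtain ⟨α₀, hα₀⟩ := hclean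
    exact (hweak α₀).pi_of_forall_ne fun α hα =>
      by_contra fun hα' => hα (hunique α α₀ hα' hα₀)

end Pi

/-- The product ring `Π α, R α` is weakly clean with respect to the product ideal
`Π α, I α` (membership being componentwise membership) if and only if each `R α` is
weakly `I α`-clean and at most one `R α` fails to be `I α`-clean. -/
theorem weaklyIdealClean_pi_iff {A : Type*} (R : A → Type*) [∀ α, Ring (R α)]
    (I : ∀ α, TwoSidedIdeal (R α)) :
    (∀ x : (∀ α, R α), ∃ e : (∀ α, R α), IsIdempotentElem e ∧
        ((∀ α, x α - e α ∈ I α) ∨ (∀ α, x α + e α ∈ I α))) ↔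
      ((∀ α, IsWeaklyIdealClean (I α)) ∧
        ∀ α β : A, ¬ IsIdealClean (I α) → ¬ IsIdealClean (I β) → α = β) := by
  simpa [IsWeaklyIdealClean] using isWeaklyIdealClean_pi_iff (I := I)
end

section
/- If R is a ring and I is a two-sided ideal of R such that R is weakly I-clean, then the Jacobson radical J(R) is contained in I. -/
/-!
For `x ∈ J(R)` the element `1 - x` has a left inverse `z`. If `x - e ∈ I` with `e` idempotent, then
`(1 - x) * e = -((x - e) * e) ∈ I`, so `e = z * (1 - x) * e ∈ I` and hence `x ∈ I`.
The case `x + e ∈ I` is the same argument applied to `-x`.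
-/

namespace TwoSidedIdeal

variable {R : Type*} [Ring R]

theorem exists_mul_one_sub_eq_one_of_mem_jacobson_bot {x : R}
    (hx : x ∈ jacobson (⊥ : TwoSidedIdeal R)) : ∃ z, z * (1 - x) = 1 := by
  obtain ⟨z, hz⟩ := mem_jacobson_iff.mp hx (-1)
  rw [mem_bot, sub_eq_zero] at hz
  exact ⟨z, by rw [mul_sub, mul_one, ← hz]; noncomm_ring⟩

theorem idempotent_mem_of_sub_mem {I : TwoSidedIdeal R} {x e z : R}
    (he : IsIdempotentElem e) (hz : z * (1 - x) = 1) (hxe : x - e ∈ I) : e ∈ I := by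
  have hprod : (1 - x) * e = -((x - e) * e) := by
    rw [sub_mul, sub_mul, he.eq, one_mul]
    abel
  have he_eq : e = z * ((1 - x) * e) := by rw [← mul_assoc, hz, one_mul]
  rw [he_eq, hprod]
  exact I.mul_mem_left _ _ (I.neg_mem (I.mul_mem_right _ _ hxe))

theorem mem_of_mem_jacobson_bot_of_sub_mem {I : TwoSidedIdeal R} {x e : R}
    (hx : x ∈ jacobson (⊥ : TwoSidedIdeal R)) (he : IsIdempotentElem e) (hxe : x - e ∈ I) :
    x ∈ I := by
  obtain ⟨z, hz⟩ := exists_mul_one_sub_eq_one_of_mem_jacobson_bot hx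
  simpa using I.add_mem hxe (idempotent_mem_of_sub_mem he hz hxe)

end TwoSidedIdeal

/-- If `R` is weakly `I`-clean, then the Jacobson radical `J(R)` is contained in `I`. -/
theorem jacobson_le_of_weaklyIdealClean {R : Type*} [Ring R] (I : TwoSidedIdeal R)
    (h : IsWeaklyIdealClean I) :
    TwoSidedIdeal.jacobson (⊥ : TwoSidedIdeal R) ≤ I := by
  intro x hx
  obtain ⟨e, he, hsub | hadd⟩ := h x
  · exact TwoSidedIdeal.mem_of_mem_jacobson_bot_of_sub_mem hx he hsub
  · have hneg : -x - e ∈ I := by rw [← neg_add']; exact I.neg_mem hadd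
    simpa using I.neg_mem (TwoSidedIdeal.mem_of_mem_jacobson_bot_of_sub_mem (neg_mem hx) he hneg)
end

section
/- Let R be a ring and suppose e = f + n, where e and f are idempotents of R, n is a nilpotent element of R, and f is central in R. Then n = 0. -/
/-- If `e = f + n` where `e, f` are idempotents, `n` is nilpotent and `f` is central,
then `n = 0`. -/
theorem nilpotent_eq_zero_of_idem_add {R : Type*} [Ring R] (e f n : R)
    (he : IsIdempotentElem e) (hf : IsIdempotentElem f) (hn : IsNilpotent n)
    (hcentral : ∀ r : R, f * r = r * f) (h : e = f + n) : n = 0 := by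
  have hn_eq : n = e - f := by rw [h, add_sub_cancel_left]
  have hef : e = f := eq_of_isNilpotent_sub_of_isIdempotentElem_of_commute he hf
    (hn_eq ▸ hn) (hcentral e).symm
  rw [hn_eq, hef, sub_self]
end

section
/- Let R be a ring all of whose idempotents are central, let n be a positive integer, and let S be the subring of the n×n upper triangular matrix ring over R consisting of those upper triangular matrices all of whose diagonal entries are equal. Then the idempotents of S are exactly the matrices e·Iₙ where e is an idempotent of R and Iₙ is the identity matrix. -/
/-!
Write `A = e + N` with `e = A₀₀` on the diagonal and `N` strictly upper triangular. Comparing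
diagonal entries of `A² = A` shows that `e` is idempotent, so the scalar matrix `e • 1` is a
central idempotent. Two commuting idempotents whose difference is nilpotent coincide, and `N` is
nilpotent, hence `A = e • 1`.
-/

theorem IsIdempotentElem.eq_of_isNilpotent_sub {R : Type*} [Ring R] {p q : R}
    (hp : IsIdempotentElem p) (hq : IsIdempotentElem q) (hpq : Commute p q)
    (h : IsNilpotent (p - q)) : p = q := by
  -- `a (1 - b) = a (a - b)` is both idempotent and nilpotent, hence zero.
  have absorb {a b : R} (ha : IsIdempotentElem a) (hb : IsIdempotentElem b) (hab : Commute a b)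
      (h : IsNilpotent (a - b)) : a = a * b := by
    have hzero : a * (1 - b) = 0 := by
      have hidem := ha.mul_of_commute ((Commute.one_right a).sub_right hab) hb.one_sub
      refine hidem.eq_zero_of_isNilpotent ?_
      rw [show a * (1 - b) = a * (a - b) by rw [mul_sub, mul_sub, ha.eq, mul_one]]
      exact ((Commute.refl a).sub_right hab).isNilpotent_mul_left h
    rwa [mul_sub, mul_one, sub_eq_zero] at hzero
  calc p = p * q := absorb hp hq hpq h
    _ = q * p := hpq.eq
    _ = q := (absorb hq hp hpq.symm (by simpa using h.neg)).symm

namespace Matrix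

theorem IsUpperTriangular.mul_apply_self {m R : Type*} [Fintype m] [LinearOrder m]
    [NonUnitalNonAssocSemiring R] {M N : Matrix m m R} (hM : M.IsUpperTriangular)
    (hN : N.IsUpperTriangular) (i : m) : (M * N) i i = M i i * N i i := by
  rw [mul_apply, Fintype.sum_eq_single i]
  intro k hk
  rcases hk.lt_or_gt with hki | hik
  · rw [hM hki, zero_mul]
  · rw [hN hik, mul_zero]

variable {R : Type*} [Semiring R] {n : ℕ} {N : Matrix (Fin n) (Fin n) R}

theorem pow_apply_eq_zero_of_lt_add (hN : ∀ i j, j ≤ i → N i j = 0) (k : ℕ) {i j : Fin n}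
    (hij : (j : ℕ) < i + k) : (N ^ k) i j = 0 := by
  induction k generalizing j with
  | zero => exact one_apply_ne (by omega)
  | succ k ih =>
    rw [pow_succ, mul_apply]
    refine Finset.sum_eq_zero fun l _ => ?_
    rcases lt_or_ge (l : ℕ) (i + k) with hl | hl
    · rw [ih hl, zero_mul]
    · rw [hN l j (by omega), mul_zero]

theorem isNilpotent_of_forall_le_imp_eq_zero (hN : ∀ i j, j ≤ i → N i j = 0) :
    IsNilpotent N :=
  ⟨n, ext fun _ j => pow_apply_eq_zero_of_lt_add hN n (by omega)⟩

end Matrix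

open Matrix in
/-- If all idempotents of `R` are central, then the idempotents of the ring `S` of
`n × n` upper triangular matrices over `R` with all diagonal entries equal are exactly
the scalar matrices `e • Iₙ` with `e` an idempotent of `R`. -/
theorem idempotent_triangular_const_diag_iff {R : Type*} [Ring R]
    (hcentral : ∀ e : R, IsIdempotentElem e → ∀ r : R, e * r = r * e)
    (n : ℕ) (hn : 0 < n) (A : Matrix (Fin n) (Fin n) R) :
    ((∀ i j : Fin n, j < i → A i j = 0) ∧ (∀ i j : Fin n, A i i = A j j) ∧
        IsIdempotentElem A) ↔
      ∃ e : R, IsIdempotentElem e ∧ A = e • (1 : Matrix (Fin n) (Fin n) R) := by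
  have hscalar (e : R) : e • (1 : Matrix (Fin n) (Fin n) R) = scalar (Fin n) e := by
    rw [smul_one_eq_diagonal, scalar_apply]
  have hscalar_idem {e : R} (he : IsIdempotentElem e) :
      IsIdempotentElem (e • (1 : Matrix (Fin n) (Fin n) R)) :=
    hscalar e ▸ he.map (scalar (Fin n))
  constructor
  · rintro ⟨htri, hdiag, hidem⟩
    have hA : A.IsUpperTriangular := fun i j => htri i j
    set e := A ⟨0, hn⟩ ⟨0, hn⟩
    have he : IsIdempotentElem e := by
      rw [IsIdempotentElem, ← hA.mul_apply_self hA, hidem.eq]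
    have hcomm : Commute A (e • 1) := hscalar e ▸ (scalar_commute e (hcentral e he) A).symm
    have hstrict : ∀ i j, j ≤ i → (A - e • 1) i j = 0 := by
      intro i j hji
      rcases hji.lt_or_eq with hji | rfl
      · simp [htri i j hji, one_apply_ne hji.ne']
      · simp [e, hdiag j ⟨0, hn⟩]
    exact ⟨e, he, hidem.eq_of_isNilpotent_sub (hscalar_idem he) hcomm
      (isNilpotent_of_forall_le_imp_eq_zero hstrict)⟩
  · rintro ⟨e, he, rfl⟩
    refine ⟨fun i j hji => ?_, fun i j => ?_, hscalar_idem he⟩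
    · simp [one_apply_ne hji.ne']
    · simp
end

section
/- Let R be a ring all of whose idempotents are central, let I be a two-sided ideal of R such that R is weakly I-clean, and let n be a positive integer. Let S be the subring of the n×n upper triangular matrix ring over R consisting of upper triangular matrices with all diagonal entries equal, and let I' = { [a_{ij}] ∈ S : the common diagonal entry a_{ii} lies in I }. Then I' is a two-sided ideal of S and S is weakly I'-clean: for every A ∈ S there exists an idempotent E ∈ S with A - E ∈ I' or A + E ∈ I'. -/
/-- The subring `S` of the `n × n` upper triangular matrix ring over `R` consisting of
upper triangular matrices all of whose diagonal entries are equal. -/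
def triangularConstDiag (R : Type*) [Ring R] (n : ℕ) :
    Subring (Matrix (Fin n) (Fin n) R) where
  carrier := {A | (∀ i j : Fin n, j < i → A i j = 0) ∧ ∀ i j : Fin n, A i i = A j j}
  zero_mem' := ⟨fun _ _ _ => rfl, fun _ _ => rfl⟩
  one_mem' := ⟨fun i j hij => Matrix.one_apply_ne (ne_of_gt hij),
    fun i j => by rw [Matrix.one_apply_eq, Matrix.one_apply_eq]⟩
  add_mem' := fun {A B} hA hB =>
    ⟨fun i j hij => by simp [Matrix.add_apply, hA.1 i j hij, hB.1 i j hij],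
      fun i j => by simp [Matrix.add_apply, hA.2 i j, hB.2 i j]⟩
  neg_mem' := fun {A} hA =>
    ⟨fun i j hij => by simp [Matrix.neg_apply, hA.1 i j hij],
      fun i j => by simp [Matrix.neg_apply, hA.2 i j]⟩
  mul_mem' := fun {A B} hA hB => by
    have key : ∀ i : Fin n, (A * B) i i = A i i * B i i := by
      intro i
      rw [Matrix.mul_apply]
      refine Finset.sum_eq_single i (fun k _ hk => ?_) (fun h => absurd (Finset.mem_univ i) h)
      rcases lt_or_gt_of_ne hk with h | h
      · rw [hA.1 i k h, zero_mul]
      · rw [hB.1 k i h, mul_zero]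
    refine ⟨fun i j hij => ?_, fun i j => by rw [key i, key j, hA.2 i j, hB.2 i j]⟩
    rw [Matrix.mul_apply]
    refine Finset.sum_eq_zero fun k _ => ?_
    rcases lt_or_ge k i with h | h
    · rw [hA.1 i k h, zero_mul]
    · rw [hB.1 k j (lt_of_lt_of_le hij h), mul_zero]

/-!
Reading off the common diagonal entry is a ring homomorphism `S →+* R`, split by the scalar
matrices `R →+* S`, and `I'` is the preimage of `I` under it. A ring is weakly clean with respect
to the preimage of an ideal under any split surjection onto a weakly `I`-clean ring: an idempotent
`e` working for the image of `x` lifts along the splitting to an idempotent working for `x`.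
-/

theorem IsWeaklyIdealClean.comap_of_leftInverse {R S : Type*} [Ring R] [Ring S]
    {I : TwoSidedIdeal R} (hI : IsWeaklyIdealClean I) (φ : S →+* R) (ψ : R →+* S)
    (hφψ : Function.LeftInverse φ ψ) : IsWeaklyIdealClean (I.comap φ) := by
  intro x
  obtain ⟨e, he, hxe⟩ := hI (φ x)
  refine ⟨ψ e, he.map ψ, ?_⟩
  simpa only [TwoSidedIdeal.mem_comap, map_sub, map_add, hφψ e] using hxe

namespace triangularConstDiag

variable {R : Type*} [Ring R] {n : ℕ}

theorem diag_mul (A B : triangularConstDiag R n) (i : Fin n) :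
    ((A * B : triangularConstDiag R n) : Matrix (Fin n) (Fin n) R) i i =
      (A : Matrix (Fin n) (Fin n) R) i i * (B : Matrix (Fin n) (Fin n) R) i i := by
  change ((A : Matrix (Fin n) (Fin n) R) * B) i i = _
  rw [Matrix.mul_apply]
  refine Finset.sum_eq_single i (fun k _ hk => ?_) (fun h => absurd (Finset.mem_univ i) h)
  rcases lt_or_gt_of_ne hk with h | h
  · rw [A.2.1 i k h, zero_mul]
  · rw [B.2.1 k i h, mul_zero]

theorem scalar_mem (r : R) : Matrix.scalar (Fin n) r ∈ triangularConstDiag R n :=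
  ⟨fun _ _ hij => Matrix.diagonal_apply_ne _ (ne_of_gt hij),
    fun _ _ => by simp only [Matrix.scalar_apply, Matrix.diagonal_apply_eq]⟩

variable (R n) in
def scalar : R →+* triangularConstDiag R n :=
  (Matrix.scalar (Fin n)).codRestrict _ scalar_mem

def diagEntry (i : Fin n) : triangularConstDiag R n →+* R where
  toFun A := (A : Matrix (Fin n) (Fin n) R) i i
  map_one' := Matrix.one_apply_eq i
  map_mul' A B := diag_mul A B i
  map_zero' := rfl
  map_add' _ _ := rfl

theorem leftInverse_diagEntry_scalar (i : Fin n) :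
    Function.LeftInverse (diagEntry i) (scalar R n) :=
  fun _ => Matrix.diagonal_apply_eq _ i

end triangularConstDiag

open triangularConstDiag in
theorem triangularConstDiag_weaklyIdealClean_general {R : Type*} [Ring R]
    (I : TwoSidedIdeal R) (hI : IsWeaklyIdealClean I) (n : ℕ) (hn : 0 < n) :
    ∃ I' : TwoSidedIdeal (triangularConstDiag R n),
      (∀ A : triangularConstDiag R n,
        A ∈ I' ↔ ∀ i : Fin n, (A : Matrix (Fin n) (Fin n) R) i i ∈ I) ∧
      IsWeaklyIdealClean I' := by
  let i₀ : Fin n := ⟨0, hn⟩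
  refine ⟨I.comap (diagEntry i₀), fun A => ?_,
    hI.comap_of_leftInverse _ _ (leftInverse_diagEntry_scalar i₀)⟩
  rw [TwoSidedIdeal.mem_comap]
  exact ⟨fun h i => A.2.2 i i₀ ▸ h, fun h => h i₀⟩

/-- If all idempotents of `R` are central and `R` is weakly `I`-clean, then
`I' = {A ∈ S | the (common) diagonal entries of A lie in I}` is a two-sided ideal of `S`
and `S` is weakly `I'`-clean. -/
theorem triangularConstDiag_weaklyIdealClean {R : Type*} [Ring R]
    (hcentral : ∀ e : R, IsIdempotentElem e → ∀ r : R, e * r = r * e)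
    (I : TwoSidedIdeal R) (hI : IsWeaklyIdealClean I) (n : ℕ) (hn : 0 < n) :
    ∃ I' : TwoSidedIdeal (triangularConstDiag R n),
      (∀ A : triangularConstDiag R n,
        A ∈ I' ↔ ∀ i : Fin n, (A : Matrix (Fin n) (Fin n) R) i i ∈ I) ∧
      IsWeaklyIdealClean I' :=
  triangularConstDiag_weaklyIdealClean_general I hI n hn
end

section
/- Let I be a two-sided ideal of a ring R such that R is uniquely weakly I-clean. Then I is idempotent free: the only idempotent element of R lying in I is 0. -/
def IsUniquelyWeaklyIdealClean {R : Type*} [Ring R] (I : TwoSidedIdeal R) : Prop :=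
  ∀ x : R, ∃! e : R, IsIdempotentElem e ∧ (x - e ∈ I ∨ x + e ∈ I)

/-- If `R` is uniquely weakly `I`-clean, then `I` is idempotent free. -/
theorem idempotent_free_of_uniquelyWeaklyIdealClean {R : Type*} [Ring R]
    (I : TwoSidedIdeal R) (h : IsUniquelyWeaklyIdealClean I) :
    ∀ e : R, IsIdempotentElem e → e ∈ I → e = 0 := by
  intro e he heI
  -- both `e` and `0` are idempotents that clean `e` modulo `I`
  exact (h e).unique ⟨he, Or.inl (by simp)⟩ ⟨.zero, Or.inl (by simpa using heI)⟩
end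

section
/- Let I be a two-sided ideal of a ring R such that R is uniquely weakly I-clean. Then R is abelian: every idempotent of R is central. -/
namespace IsIdempotentElem

variable {R : Type*} [Ring R] {e : R}

lemma mul_mul_one_sub_mul_self (he : IsIdempotentElem e) (r : R) :
    e * r * (1 - e) * (e * r * (1 - e)) = 0 := by
  simp only [mul_assoc, ← mul_assoc (1 - e) e, he.one_sub_mul_self, zero_mul, mul_zero]

lemma one_sub_mul_mul_mul_self (he : IsIdempotentElem e) (r : R) :
    (1 - e) * r * e * ((1 - e) * r * e) = 0 := by
  simp only [mul_assoc, ← mul_assoc e (1 - e), he.mul_one_sub_self, zero_mul, mul_zero]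

lemma add_mul_mul_one_sub (he : IsIdempotentElem e) (r : R) :
    IsIdempotentElem (e + e * r * (1 - e)) := by
  have h1 : e * (e * r * (1 - e)) = e * r * (1 - e) := by simp only [← mul_assoc, he.eq]
  have h2 : e * r * (1 - e) * e = 0 := by rw [mul_assoc, he.one_sub_mul_self, mul_zero]
  rw [IsIdempotentElem, add_mul, mul_add, mul_add, he.eq, h1, h2, he.mul_mul_one_sub_mul_self]
  simp only [add_zero]

lemma add_one_sub_mul_mul (he : IsIdempotentElem e) (r : R) :
    IsIdempotentElem (e + (1 - e) * r * e) := by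
  have h1 : e * ((1 - e) * r * e) = 0 := by simp only [← mul_assoc, he.mul_one_sub_self, zero_mul]
  have h2 : (1 - e) * r * e * e = (1 - e) * r * e := by rw [mul_assoc, he.eq]
  rw [IsIdempotentElem, add_mul, mul_add, mul_add, he.eq, h1, h2, he.one_sub_mul_mul_mul_self]
  simp only [add_zero]

end IsIdempotentElem

lemma mul_eq_mul_of_mul_mul_one_sub_eq_zero {R : Type*} [Ring R] {e r : R}
    (h₁ : e * r * (1 - e) = 0) (h₂ : (1 - e) * r * e = 0) : e * r = r * e := by
  rw [mul_one_sub, sub_eq_zero] at h₁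
  rw [one_sub_mul, sub_mul, sub_eq_zero] at h₂
  rw [h₁, h₂]

lemma TwoSidedIdeal.mem_of_isIdempotentElem_of_add_mem {R : Type*} [Ring R] {I : TwoSidedIdeal R}
    {a g : R} (hg : IsIdempotentElem g) (ha : a * a = 0) (hag : a + g ∈ I) : g ∈ I := by
  have key : g * (a + g) - (a + g) * a = g := by
    rw [mul_add, add_mul, hg.eq, ha]; abel
  exact key ▸ I.sub_mem (I.mul_mem_left _ _ hag) (I.mul_mem_right _ _ hag)

namespace IsUniquelyWeaklyIdealClean

variable {R : Type*} [Ring R] {I : TwoSidedIdeal R}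

lemma eq_of_sub_mem (h : IsUniquelyWeaklyIdealClean I) {p q : R} (hp : IsIdempotentElem p)
    (hq : IsIdempotentElem q) (hpq : p - q ∈ I) : p = q :=
  (h p).unique ⟨hp, .inl (by simp)⟩ ⟨hq, .inl hpq⟩

lemma mem_of_mul_self_eq_zero (h : IsUniquelyWeaklyIdealClean I) {a : R} (ha : a * a = 0) :
    a ∈ I := by
  obtain ⟨g, ⟨hg, hag⟩, -⟩ := h a
  have hgI : g ∈ I := by
    rcases hag with hag | hag
    · refine I.mem_of_isIdempotentElem_of_add_mem hg (a := -a) (by simpa using ha) ?_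
      simpa [neg_add_eq_sub] using I.neg_mem hag
    · exact I.mem_of_isIdempotentElem_of_add_mem hg ha hag
  have hg0 : g = 0 := h.eq_of_sub_mem hg .zero (by simpa using hgI)
  rcases hag with hag | hag <;> simpa [hg0] using hag

lemma eq_zero_of_isIdempotentElem_add (h : IsUniquelyWeaklyIdealClean I) {e a : R}
    (he : IsIdempotentElem e) (hea : IsIdempotentElem (e + a)) (ha : a * a = 0) : a = 0 :=
  add_eq_left.mp (h.eq_of_sub_mem hea he (by simpa using h.mem_of_mul_self_eq_zero ha))

end IsUniquelyWeaklyIdealClean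

/-- If `R` is uniquely weakly `I`-clean, then `R` is abelian: every idempotent is
central. -/
theorem abelian_of_uniquelyWeaklyIdealClean {R : Type*} [Ring R]
    (I : TwoSidedIdeal R) (h : IsUniquelyWeaklyIdealClean I) :
    ∀ e : R, IsIdempotentElem e → ∀ r : R, e * r = r * e := by
  intro e he r
  have upper : e * r * (1 - e) = 0 :=
    h.eq_zero_of_isIdempotentElem_add he (he.add_mul_mul_one_sub r) (he.mul_mul_one_sub_mul_self r)
  have lower : (1 - e) * r * e = 0 :=
    h.eq_zero_of_isIdempotentElem_add he (he.add_one_sub_mul_mul r) (he.one_sub_mul_mul_mul_self r)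
  exact mul_eq_mul_of_mul_mul_one_sub_eq_zero upper lower
end

section
/- Let I be a two-sided ideal of a ring R. Then R is uniquely weakly I-clean if and only if R/I is semi boolean and idempotents lift uniquely weakly modulo I. -/
/-!
The condition `x - e ∈ I ∨ x + e ∈ I` says that `x ≡ ±e` modulo `I`, and it is unchanged when
`x` is replaced by `-x`. Since `y ^ 2 = -y` exactly when `-y` is idempotent, `R/I` is semi
boolean iff every class is `±` an idempotent class. So a weakly clean decomposition of `x` makes
`x + I` semi boolean, and conversely, if `x + I` or `-x + I` is idempotent, the unique weak lift
of `x` or of `-x` is the unique idempotent weakly congruent to `x`.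
-/

theorem isIdempotentElem_neg_iff_sq_eq_neg {S : Type*} [Monoid S] [HasDistribNeg S] (y : S) :
    IsIdempotentElem (-y) ↔ y ^ 2 = -y := by
  rw [IsIdempotentElem, neg_mul_neg, sq]

theorem sq_eq_self_or_sq_eq_neg_iff {S : Type*} [Monoid S] [HasDistribNeg S] (y : S) :
    y ^ 2 = y ∨ y ^ 2 = -y ↔ IsIdempotentElem y ∨ IsIdempotentElem (-y) := by
  rw [isIdempotentElem_neg_iff_sq_eq_neg, IsIdempotentElem, sq]

namespace TwoSidedIdeal

variable {R : Type*} [Ring R] (I : TwoSidedIdeal R)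

theorem neg_sub_mem_or_neg_add_mem_iff (x e : R) :
    (-x - e ∈ I ∨ -x + e ∈ I) ↔ (x - e ∈ I ∨ x + e ∈ I) := by
  rw [← neg_add', show -x + e = -(x - e) by abel, neg_mem_iff, neg_mem_iff, or_comm]

theorem coe_eq_coe_iff_sub_mem (x y : R) :
    (x : I.ringCon.Quotient) = y ↔ x - y ∈ I :=
  RingCon.eq _ |>.trans (I.rel_iff x y)

theorem isIdempotentElem_coe_iff (x : R) :
    IsIdempotentElem (x : I.ringCon.Quotient) ↔ x ^ 2 - x ∈ I := by
  rw [IsIdempotentElem, ← RingCon.coe_mul, coe_eq_coe_iff_sub_mem, sq]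

theorem isIdempotentElem_coe_or_neg_of_sub_mem_or_add_mem {x e : R} (he : IsIdempotentElem e)
    (hxe : x - e ∈ I ∨ x + e ∈ I) :
    IsIdempotentElem (x : I.ringCon.Quotient) ∨ IsIdempotentElem (-(x : I.ringCon.Quotient)) := by
  rcases hxe with hxe | hxe
  · left
    rw [(I.coe_eq_coe_iff_sub_mem x e).2 hxe]
    exact he.map I.ringCon.mk'
  · right
    have hnxe : -x - e ∈ I := by rw [← neg_add']; exact I.neg_mem hxe
    rw [← RingCon.coe_neg, (I.coe_eq_coe_iff_sub_mem (-x) e).2 hnxe]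
    exact he.map I.ringCon.mk'

end TwoSidedIdeal

/-- `R` is uniquely weakly `I`-clean if and only if `R/I` is semi boolean and idempotents
lift uniquely weakly modulo `I`. -/
theorem uniquelyWeaklyIdealClean_iff {R : Type*} [Ring R] (I : TwoSidedIdeal R) :
    (∀ x : R, ∃! e : R, IsIdempotentElem e ∧ (x - e ∈ I ∨ x + e ∈ I)) ↔
      ((∀ y : I.ringCon.Quotient, y ^ 2 = y ∨ y ^ 2 = -y) ∧
        ∀ x : R, x ^ 2 - x ∈ I →
          ∃! e : R, IsIdempotentElem e ∧ (x - e ∈ I ∨ x + e ∈ I)) := by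
  constructor
  · intro hclean
    refine ⟨fun y => ?_, fun x _ => hclean x⟩
    obtain ⟨x, rfl⟩ := Quotient.exists_rep y
    obtain ⟨e, ⟨he, hxe⟩, -⟩ := hclean x
    exact (sq_eq_self_or_sq_eq_neg_iff _).2
      (I.isIdempotentElem_coe_or_neg_of_sub_mem_or_add_mem he hxe)
  · rintro ⟨hsemiBoolean, hlift⟩ x
    rcases (sq_eq_self_or_sq_eq_neg_iff _).1 (hsemiBoolean x) with hx | hx
    · exact hlift x ((I.isIdempotentElem_coe_iff x).1 hx)
    · rw [← RingCon.coe_neg, I.isIdempotentElem_coe_iff] at hx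
      simpa only [I.neg_sub_mem_or_neg_add_mem_iff] using hlift (-x) hx
end

section
/- For a commutative ring R, R is uniquely weakly nil clean if and only if R/Nil(R) is semi boolean and idempotents lift uniquely weakly modulo Nil(R). -/
/-! Modulo `Nil(R)`, `y ^ 2 = -y` says that `-y` is idempotent, and an idempotent is congruent
to `x` up to sign exactly when it is congruent to `-x` up to sign. So in a semi boolean reduction
every `x` or `-x` satisfies the lifting hypothesis, and its unique lift serves for `x`. -/

namespace Ideal

variable {R : Type*} [CommRing R] (I : Ideal R)

def IsSignedIdempotentLift (x e : R) : Prop :=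
  IsIdempotentElem e ∧ (x - e ∈ I ∨ x + e ∈ I)

variable {I}

theorem isSignedIdempotentLift_neg_iff {x e : R} :
    I.IsSignedIdempotentLift (-x) e ↔ I.IsSignedIdempotentLift x e := by
  have hsub : -x - e = -(x + e) := by ring
  have hadd : -x + e = -(x - e) := by ring
  simp only [IsSignedIdempotentLift, hsub, hadd, I.neg_mem_iff, or_comm]

theorem Quotient.mk_sq_eq_self_iff {x : R} :
    Quotient.mk I x ^ 2 = Quotient.mk I x ↔ x ^ 2 - x ∈ I := by
  rw [← map_pow, Quotient.mk_eq_mk_iff_sub_mem]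

theorem IsSignedIdempotentLift.mk_sq_eq_or_eq_neg {x e : R}
    (h : I.IsSignedIdempotentLift x e) :
    Quotient.mk I x ^ 2 = Quotient.mk I x ∨ Quotient.mk I x ^ 2 = -Quotient.mk I x := by
  obtain ⟨he, hxe⟩ := h
  have hsq : Quotient.mk I e ^ 2 = Quotient.mk I e := by rw [← map_pow, sq, he]
  rcases hxe with hxe | hxe
  · have hx : Quotient.mk I x = Quotient.mk I e := (Quotient.mk_eq_mk_iff_sub_mem x e).mpr hxe
    exact .inl (by rw [hx, hsq])
  · have hx : Quotient.mk I x = -Quotient.mk I e := by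
      rw [eq_neg_iff_add_eq_zero, ← map_add, Quotient.eq_zero_iff_mem]
      exact hxe
    exact .inr (by rw [hx, neg_sq, hsq, neg_neg])

end Ideal

/-- A commutative ring `R` is uniquely weakly nil clean if and only if `R/Nil(R)` is semi
boolean and idempotents lift uniquely weakly modulo `Nil(R)`. -/
theorem uniquelyWeaklyNilClean_iff {R : Type*} [CommRing R] :
    (∀ x : R, ∃! e : R, IsIdempotentElem e ∧
        (x - e ∈ nilradical R ∨ x + e ∈ nilradical R)) ↔
      ((∀ y : R ⧸ nilradical R, y ^ 2 = y ∨ y ^ 2 = -y) ∧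
        ∀ x : R, x ^ 2 - x ∈ nilradical R →
          ∃! e : R, IsIdempotentElem e ∧
            (x - e ∈ nilradical R ∨ x + e ∈ nilradical R)) := by
  constructor
  · intro h
    refine ⟨fun y => ?_, fun x _ => h x⟩
    obtain ⟨x, rfl⟩ := Ideal.Quotient.mk_surjective y
    obtain ⟨e, he, -⟩ := h x
    exact Ideal.IsSignedIdempotentLift.mk_sq_eq_or_eq_neg he
  · rintro ⟨hsemiBoolean, hlift⟩ x
    rcases hsemiBoolean (Ideal.Quotient.mk _ x) with hx | hx
    · exact hlift x (Ideal.Quotient.mk_sq_eq_self_iff.mp hx)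
    · have hnegx := hlift (-x)
        (Ideal.Quotient.mk_sq_eq_self_iff.mp (by rw [map_neg, neg_sq, hx]))
      exact (existsUnique_congr fun e => Ideal.isSignedIdempotentLift_neg_iff).mp hnegx
end
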